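/- Mechanism 2 with parameters k ≥ 2 and a ∈ (0,1) has social-cost approximation ratio at most max((1−a)k/(2a), a·k/(2(1−a)))·(n − 1): for every profile x ∈ ℝ^n, SC(f, x) ≤ max((1−a)k/(2a), a·k/(2(1−a)))·(n−1)·OPT(x). -/

import Mathlib

/-!
Whatever two facilities are chosen, two of any three agents share a facility, so every solution
costs at least `min (x j - x i) (x m - x j)` for all agents `i`, `j`, `m`. Applied to the triples
(leftmost, dictator, rightmost) and (dictator, agent, rightmost) (or its mirror image), this bounds
the cost of every agent other than the dictator by `max((1-a)k/(2a), ak/(2(1-a)))` times the cost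
of any solution; the dictator itself pays nothing.
-/

noncomputable def cost2 (p : ℝ × ℝ) (y : ℝ) : ℝ := min |p.1 - y| |p.2 - y|

noncomputable def SC {n : ℕ} (p : ℝ × ℝ) (x : Fin n → ℝ) : ℝ := ∑ i, cost2 p (x i)

noncomputable def OPT {n : ℕ} (x : Fin n → ℝ) : ℝ :=
  sInf {c | ∃ l1 l2 : ℝ, c = SC (l1, l2) x}

/-- Mechanism 2 with parameters `k`, `a` and dictator `t`, extended to general
profiles by translation and scaling.  With `x_l` the leftmost location, `x_r` the
rightmost and `L = x_r - x_l`: if `x_t` lies in the first `a`-fraction of the range,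
`l2 = x_t + max((1-a)k/a·(x_t - x_l), x_r - x_t)`; otherwise
`l2 = x_t - max(x_t - x_l, ak/(1-a)·(x_r - x_t))`. -/
noncomputable def mech2 {n : ℕ} (k a : ℝ) (t : Fin n) (x : Fin n → ℝ) : ℝ × ℝ :=
  let xl := Finset.univ.inf' ⟨t, Finset.mem_univ t⟩ x
  let xr := Finset.univ.sup' ⟨t, Finset.mem_univ t⟩ x
  let L := xr - xl
  (x t,
    if x t < xl + a * L then x t + max ((1 - a) * k / a * (x t - xl)) (xr - x t)
    else x t - max (x t - xl) (a * k / (1 - a) * (xr - x t)))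

lemma cost2_nonneg (p : ℝ × ℝ) (y : ℝ) : 0 ≤ cost2 p y := le_min (abs_nonneg _) (abs_nonneg _)

lemma SC_nonneg {n : ℕ} (p : ℝ × ℝ) (x : Fin n → ℝ) : 0 ≤ SC p x :=
  Finset.sum_nonneg fun _ _ => cost2_nonneg p _

/-- Two facilities serve three points, so one facility serves two of them. -/
lemma min_sub_le_cost2_add (p : ℝ × ℝ) (y₁ y₂ y₃ : ℝ) :
    min (y₂ - y₁) (y₃ - y₂) ≤ cost2 p y₁ + cost2 p y₂ + cost2 p y₃ := by
  have shared : ∀ u v f : ℝ, v - u ≤ |f - u| + |f - v| := fun u v f => by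
    have := abs_sub_le u f v
    rw [abs_sub_comm u f] at this
    linarith [le_abs_self (v - u), abs_sub_comm u v]
  obtain ⟨l₁, l₂⟩ := p
  simp only [cost2, min_def]
  rcases le_total y₂ y₃ with h | h <;> split_ifs <;>
    linarith [shared y₁ y₂ l₁, shared y₁ y₂ l₂, shared y₂ y₃ l₁, shared y₂ y₃ l₂,
      shared y₁ y₃ l₁, shared y₁ y₃ l₂, abs_nonneg (l₁ - y₁), abs_nonneg (l₂ - y₁),
      abs_nonneg (l₁ - y₂), abs_nonneg (l₂ - y₂), abs_nonneg (l₁ - y₃), abs_nonneg (l₂ - y₃)]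

lemma min_sub_le_SC {n : ℕ} (p : ℝ × ℝ) (x : Fin n → ℝ) (i j m : Fin n) :
    min (x j - x i) (x m - x j) ≤ SC p x := by
  have hSC := SC_nonneg p x
  by_cases hdeg : i = j ∨ j = m ∨ i = m
  · refine le_trans ?_ hSC
    rcases hdeg with rfl | rfl | rfl <;> simp only [sub_self, min_le_iff, le_refl, true_or, or_true]
    rw [← neg_sub, neg_nonpos]
    exact le_total _ _
  push Not at hdeg
  obtain ⟨hij, hjm, him⟩ := hdeg
  calc min (x j - x i) (x m - x j) ≤ cost2 p (x i) + cost2 p (x j) + cost2 p (x m) :=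
        min_sub_le_cost2_add p _ _ _
    _ = ∑ l ∈ {i, j, m}, cost2 p (x l) := by
        rw [Finset.sum_insert (by simp [hij, him]), Finset.sum_insert (by simp [hjm]),
          Finset.sum_singleton, add_assoc]
    _ ≤ SC p x := Finset.sum_le_sum_of_subset_of_nonneg (Finset.subset_univ _)
        fun l _ _ => cost2_nonneg p _

lemma le_mul_OPT {n : ℕ} {x : Fin n → ℝ} {A D : ℝ} (hD : 0 ≤ D)
    (h : ∀ l₁ l₂ : ℝ, A ≤ D * SC (l₁, l₂) x) : A ≤ D * OPT x := by
  have hne : {c | ∃ l₁ l₂ : ℝ, c = SC (l₁, l₂) x}.Nonempty := ⟨_, 0, 0, rfl⟩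
  rw [OPT, ← smul_eq_mul, ← Real.sInf_smul_of_nonneg hD]
  refine le_csInf hne.smul_set ?_
  rintro _ ⟨_, ⟨l₁, l₂, rfl⟩, rfl⟩
  exact h l₁ l₂

noncomputable def mech2Bound (k a : ℝ) : ℝ := max ((1 - a) * k / (2 * a)) (a * k / (2 * (1 - a)))

section mech2Bound

variable {k a : ℝ}

lemma mech2Bound_one_sub (k a : ℝ) : mech2Bound k (1 - a) = mech2Bound k a := by
  rw [mech2Bound, mech2Bound, sub_sub_cancel, max_comm]

lemma one_sub_mul_le_mul_mech2Bound (ha0 : 0 < a) : (1 - a) * k ≤ 2 * a * mech2Bound k a := by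
  rw [← div_le_iff₀' (by positivity)]
  exact le_max_left _ _

lemma mul_le_one_sub_mul_mech2Bound (ha1 : a < 1) : a * k ≤ 2 * (1 - a) * mech2Bound k a := by
  rw [← div_le_iff₀' (by linarith)]
  exact le_max_right _ _

/-- For `a ≤ 1 / 2` the first candidate is at least `k / 2`, otherwise the second is. -/
lemma le_two_mul_mech2Bound (ha0 : 0 < a) (ha1 : a < 1) : k ≤ 2 * mech2Bound k a := by
  have h₁ := one_sub_mul_le_mul_mech2Bound (k := k) ha0
  have h₂ := mul_le_one_sub_mul_mech2Bound (k := k) ha1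
  rcases le_total a (1 / 2) with h | h <;> nlinarith

lemma le_one_sub_mul_mech2Bound (hk : 2 ≤ k) (ha0 : 0 < a) (ha1 : a < 1) :
    a ≤ (1 - a) * mech2Bound k a := by
  linarith [mul_le_one_sub_mul_mech2Bound (k := k) ha1, mul_le_mul_of_nonneg_left hk ha0.le]

lemma one_le_mech2Bound (hk : 2 ≤ k) (ha0 : 0 < a) (ha1 : a < 1) : 1 ≤ mech2Bound k a := by
  linarith [le_two_mul_mech2Bound (k := k) ha0 ha1]

end mech2Bound

lemma cost2_eq_min_of_le_of_le {u v y : ℝ} (huy : u ≤ y) (hyv : y ≤ v) :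
    cost2 (u, v) y = min (y - u) (v - y) := by
  rw [cost2, abs_sub_comm, abs_of_nonneg (sub_nonneg.2 huy), abs_of_nonneg (sub_nonneg.2 hyv)]

lemma cost2_neg (u v y : ℝ) : cost2 (-u, -v) (-y) = cost2 (u, v) y := by
  simp only [cost2, neg_sub_neg]
  rw [abs_sub_comm y u, abs_sub_comm y v]

section branches

variable {k a xl xt xr y S : ℝ}

/-- The branch of `mech2` where the dictator lies in the first `a`-fraction of the range. -/
lemma cost2_rightBranch_le (hk : 2 ≤ k) (ha0 : 0 < a) (ha1 : a < 1)
    (hyl : xl ≤ y) (hyr : y ≤ xr) (htl : xl ≤ xt) (hA : (1 - a) * (xt - xl) ≤ a * (xr - xt))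
    (hd : min (xt - xl) (xr - xt) ≤ S) (hmid : min (y - xt) (xr - y) ≤ S) :
    cost2 (xt, xt + max ((1 - a) * k / a * (xt - xl)) (xr - xt)) y ≤ mech2Bound k a * S := by
  set C := mech2Bound k a
  set M := (1 - a) * k / a * (xt - xl) with hM_def
  have hC1 : 1 ≤ C := one_le_mech2Bound hk ha0 ha1
  have htr : xt ≤ xr := by nlinarith
  have hS : 0 ≤ S := (le_min (sub_nonneg.2 htl) (sub_nonneg.2 htr)).trans hd
  have hdist : xt - xl ≤ C * min (xt - xl) (xr - xt) := by
    rcases min_choice (xt - xl) (xr - xt) with h | h <;> rw [h]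
    · nlinarith
    · refine le_of_mul_le_mul_left ?_ (sub_pos.2 ha1)
      nlinarith [le_one_sub_mul_mech2Bound hk ha0 ha1]
  have hM : M ≤ 2 * C * min (xt - xl) (xr - xt) := by
    have haM : a * M = (1 - a) * k * (xt - xl) := by rw [hM_def]; field_simp
    refine le_of_mul_le_mul_left ?_ ha0
    rcases min_choice (xt - xl) (xr - xt) with h | h <;> rw [h, haM]
    · nlinarith [one_sub_mul_le_mul_mech2Bound (k := k) ha0]
    · have hkA := mul_le_mul_of_nonneg_left hA (by linarith : (0 : ℝ) ≤ k)
      have hkC := mul_le_mul_of_nonneg_right (le_two_mul_mech2Bound (k := k) ha0 ha1)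
        (mul_nonneg ha0.le (sub_nonneg.2 htr))
      linarith
  rcases le_total y xt with hyt | hyt
  · calc cost2 _ y ≤ |xt - y| := min_le_left _ _
      _ = xt - y := abs_of_nonneg (sub_nonneg.2 hyt)
      _ ≤ C * min (xt - xl) (xr - xt) := by linarith
      _ ≤ C * S := by gcongr
  rcases max_cases M (xr - xt) with ⟨hmax, hle⟩ | ⟨hmax, -⟩ <;> rw [hmax]
  · rw [cost2_eq_min_of_le_of_le hyt (by linarith)]
    have := min_le_left (y - xt) (xt + M - y)
    have := min_le_right (y - xt) (xt + M - y)
    nlinarith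
  · rw [add_sub_cancel, cost2_eq_min_of_le_of_le hyt hyr]
    nlinarith

/-- Reflect the line and swap `a` with `1 - a`. -/
lemma cost2_leftBranch_le (hk : 2 ≤ k) (ha0 : 0 < a) (ha1 : a < 1)
    (hyl : xl ≤ y) (hyr : y ≤ xr) (htr : xt ≤ xr) (hB : a * (xr - xt) ≤ (1 - a) * (xt - xl))
    (hd : min (xt - xl) (xr - xt) ≤ S) (hmid : min (y - xl) (xt - y) ≤ S) :
    cost2 (xt, xt - max (xt - xl) (a * k / (1 - a) * (xr - xt))) y ≤ mech2Bound k a * S := by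
  have h := cost2_rightBranch_le (a := 1 - a) (xl := -xr) (xt := -xt) (xr := -xl) (y := -y)
    (S := S) hk (by linarith) (by linarith) (neg_le_neg hyr) (neg_le_neg hyl) (neg_le_neg htr)
    (by linarith) (by rwa [neg_sub_neg, neg_sub_neg, min_comm])
    (by rwa [neg_sub_neg, neg_sub_neg, min_comm])
  rwa [mech2Bound_one_sub, sub_sub_cancel, neg_sub_neg, neg_sub_neg, max_comm,
    ← sub_neg_eq_add, ← neg_sub', cost2_neg] at h

end branches

section mech2

variable {n : ℕ} {k a : ℝ}

lemma cost2_mech2_self (t : Fin n) (x : Fin n → ℝ) : cost2 (mech2 k a t x) (x t) = 0 := by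
  simp [mech2, cost2]

lemma cost2_mech2_le (hk : 2 ≤ k) (ha0 : 0 < a) (ha1 : a < 1) (t : Fin n) (x : Fin n → ℝ)
    (p : ℝ × ℝ) (i : Fin n) : cost2 (mech2 k a t x) (x i) ≤ mech2Bound k a * SC p x := by
  obtain ⟨l, -, hl⟩ := Finset.univ.exists_mem_eq_inf' ⟨t, Finset.mem_univ t⟩ x
  obtain ⟨r, -, hr⟩ := Finset.univ.exists_mem_eq_sup' ⟨t, Finset.mem_univ t⟩ x
  have hle (j : Fin n) : x l ≤ x j := hl ▸ Finset.inf'_le x (Finset.mem_univ j)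
  have hge (j : Fin n) : x j ≤ x r := hr ▸ Finset.le_sup' x (Finset.mem_univ j)
  have hd := min_sub_le_SC p x l t r
  simp only [mech2, hl, hr]
  split_ifs with h
  · exact cost2_rightBranch_le hk ha0 ha1 (hle i) (hge i) (hle t) (by linarith) hd
      (min_sub_le_SC p x t i r)
  · exact cost2_leftBranch_le hk ha0 ha1 (hle i) (hge i) (hge t) (by linarith) hd
      (min_sub_le_SC p x l i t)

lemma SC_mech2_le (hk : 2 ≤ k) (ha0 : 0 < a) (ha1 : a < 1) (t : Fin n) (x : Fin n → ℝ)
    (p : ℝ × ℝ) : SC (mech2 k a t x) x ≤ mech2Bound k a * ((n : ℝ) - 1) * SC p x := by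
  rw [SC, ← Finset.add_sum_erase _ _ (Finset.mem_univ t), cost2_mech2_self, zero_add]
  calc ∑ i ∈ Finset.univ.erase t, cost2 (mech2 k a t x) (x i)
      ≤ ∑ _i ∈ Finset.univ.erase t, mech2Bound k a * SC p x :=
        Finset.sum_le_sum fun i _ => cost2_mech2_le hk ha0 ha1 t x p i
    _ = mech2Bound k a * ((n : ℝ) - 1) * SC p x := by
        rw [Finset.sum_const, Finset.card_erase_of_mem (Finset.mem_univ t), Finset.card_univ,
          Fintype.card_fin, nsmul_eq_mul, Nat.cast_sub t.pos, Nat.cast_one]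
        ring

end mech2

/-- Mechanism 2 has approximation ratio at most
`max((1-a)k/(2a), ak/(2(1-a)))·(n - 1)`. -/
theorem stmt9 {n : ℕ} (k a : ℝ) (hk : 2 ≤ k) (ha0 : 0 < a) (ha1 : a < 1)
    (t : Fin n) (x : Fin n → ℝ) :
    SC (mech2 k a t x) x ≤
      max ((1 - a) * k / (2 * a)) (a * k / (2 * (1 - a))) * ((n : ℝ) - 1) * OPT x := by
  have hn : (1 : ℝ) ≤ n := Nat.one_le_cast.2 t.pos
  have hC : 0 ≤ mech2Bound k a := zero_le_one.trans (one_le_mech2Bound hk ha0 ha1)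
  exact le_mul_OPT (mul_nonneg hC (sub_nonneg.2 hn)) fun l₁ l₂ =>
    SC_mech2_le hk ha0 ha1 t x (l₁, l₂)
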